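/- Let G be a countable group, d : ℕ → ℕ, and α_m : G → U(d m) maps such that for all g, h ∈ G, ‖α_m(gh) − α_m(g)α_m(h)‖ → 0 as m → ∞. Suppose g ∈ G satisfies limsup_m ‖α_m(g) − 1‖ > 0. Then there exist e : ℕ → ℕ and maps β_m : G → U(e m) such that for all q, h ∈ G, ‖β_m(qh) − β_m(q)β_m(h)‖ → 0 as m → ∞, and limsup_m ‖β_m(g) − 1‖ ≥ √2. -/

import Mathlib

/-!
Amplify every unitary `u` to `u ⊕ (u ⊗ u)`. This is multiplicative and Lipschitz on unitaries,
so it maps asymptotic representations to asymptotic representations. If `w` is an eigenvalue of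
`u` with `|w - 1| = ‖u - 1‖ = t` (it exists because `u - 1` is normal), then `w²` is an eigenvalue
of `u ⊗ u` and `|w² - 1| = t |w + 1| = t √(4 - t²)`, so the amplified distance to `1` is at least
`min √2 (√2 t)`. Iterating `K` times turns a distance `c > 0` attained infinitely often into
`min √2 (√2 ^ K c) = √2`.
-/

open Filter

/-- The operator norm (as operators on `ℂⁿ` with the `ℓ²` norm) of a complex matrix. -/
noncomputable def matOpNorm {N : Type*} [Fintype N] [DecidableEq N]
    (A : Matrix N N ℂ) : ℝ :=
  ‖Matrix.toEuclideanCLM (𝕜 := ℂ) (n := N) A‖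

/-- A sequence of maps `αₘ : G → U(d m)` is an asymptotic representation if
`‖αₘ(gh) − αₘ(g)αₘ(h)‖ → 0` for all `g h : G`. -/
def IsAsymptoticRep {G : Type*} [Group G] (d : ℕ → ℕ)
    (α : ∀ m : ℕ, G → Matrix.unitaryGroup (Fin (d m)) ℂ) : Prop :=
  ∀ g h : G,
    Tendsto (fun m : ℕ =>
      matOpNorm ((α m (g * h) : Matrix (Fin (d m)) (Fin (d m)) ℂ) -
        (α m g : Matrix (Fin (d m)) (Fin (d m)) ℂ) *
        (α m h : Matrix (Fin (d m)) (Fin (d m)) ℂ)))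
      atTop (nhds 0)

/-- A group is MF if it admits an asymptotic representation `(αₘ)` such that, for every
`g ≠ 1`, `‖αₘ(g) − 1‖` does not converge to `0`. -/
def IsMFGroup (G : Type*) [Group G] : Prop :=
  ∃ (d : ℕ → ℕ) (α : ∀ m : ℕ, G → Matrix.unitaryGroup (Fin (d m)) ℂ),
    IsAsymptoticRep d α ∧
    ∀ g : G, g ≠ 1 →
      ¬ Tendsto (fun m : ℕ =>
          matOpNorm ((α m g : Matrix (Fin (d m)) (Fin (d m)) ℂ) - 1))
        atTop (nhds 0)

open Matrix
open scoped Matrix.Norms.L2Operator Kronecker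

lemma matOpNorm_eq_norm {N : Type*} [Fintype N] [DecidableEq N] (A : Matrix N N ℂ) :
    matOpNorm A = ‖A‖ :=
  rfl

lemma CStarRing.norm_le_one_of_mem_unitary {E : Type*} [NormedRing E] [StarRing E] [CStarRing E]
    {u : E} (hu : u ∈ unitary E) : ‖u‖ ≤ 1 := by
  nontriviality E
  exact (CStarRing.norm_of_mem_unitary hu).le

lemma Real.min_sqrt_two_sqrt_two_mul_min (x : ℝ) :
    min √2 (√2 * min √2 x) = min √2 (√2 * x) := by
  have h2 : √2 * √2 = 2 := Real.mul_self_sqrt zero_le_two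
  have hle : √2 ≤ 2 := by nlinarith [Real.one_lt_sqrt_two]
  rw [mul_min_of_nonneg _ _ (Real.sqrt_nonneg 2), h2, ← min_assoc, min_eq_left hle]

lemma Complex.min_sqrt_two_le_max_norm_sub_one {w : ℂ} (hw : ‖w‖ = 1) :
    min √2 (√2 * ‖w - 1‖) ≤ max ‖w - 1‖ ‖w ^ 2 - 1‖ := by
  set t := ‖w - 1‖
  rcases le_or_gt √2 t with ht | ht
  · exact (min_le_left _ _).trans (ht.trans (le_max_left _ _))
  refine (min_le_right _ _).trans (le_max_of_le_right ?_)
  have hplus : ‖w + 1‖ ^ 2 = 4 - t ^ 2 := by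
    have := parallelogram_law_with_norm ℝ w 1
    rw [hw, norm_one] at this
    nlinarith
  have hsq : ‖w ^ 2 - 1‖ = t * ‖w + 1‖ := by
    rw [← norm_mul]
    ring_nf
  have hplus_ge : √2 ≤ ‖w + 1‖ := by
    have ht0 : 0 ≤ t := norm_nonneg _
    have h2 : √2 ^ 2 = 2 := Real.sq_sqrt zero_le_two
    rw [Real.sqrt_le_left (norm_nonneg _)]
    nlinarith
  rw [hsq, mul_comm]
  exact mul_le_mul_of_nonneg_left hplus_ge (norm_nonneg _)

namespace Matrix

lemma kronecker_mulVec_kronecker {R N M : Type*} [CommSemiring R] [Fintype N] [Fintype M]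
    (A : Matrix N N R) (B : Matrix M M R) (x : N → R) (y : M → R) :
    (A ⊗ₖ B) *ᵥ (fun p => x p.1 * y p.2) = fun p => (A *ᵥ x) p.1 * (B *ᵥ y) p.2 := by
  ext p
  simp only [mulVec, dotProduct, kroneckerMap_apply, Fintype.sum_prod_type, Finset.sum_mul_sum]
  exact Finset.sum_congr rfl fun i _ => Finset.sum_congr rfl fun j _ => by ring

lemma exists_mulVec_eq_smul_of_mem_spectrum {K N : Type*} [Field K] [Fintype N] [DecidableEq N]
    {A : Matrix N N K} {μ : K} (h : μ ∈ spectrum K A) : ∃ x : N → K, x ≠ 0 ∧ A *ᵥ x = μ • x := by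
  rw [← spectrum_toLin', ← Module.End.hasEigenvalue_iff_mem_spectrum] at h
  obtain ⟨x, hx⟩ := h.exists_hasEigenvector
  exact ⟨x, hx.2, by simpa using hx.apply_eq_smul⟩

variable {N M : Type*} [Fintype N] [DecidableEq N] [Fintype M] [DecidableEq M]

lemma norm_le_l2_opNorm_of_mulVec_eq_smul {A : Matrix N N ℂ} {μ : ℂ} {x : N → ℂ} (hx : x ≠ 0)
    (h : A *ᵥ x = μ • x) : ‖μ‖ ≤ ‖A‖ := by
  have key := l2_opNorm_mulVec A ((EuclideanSpace.equiv N ℂ).symm x)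
  rw [show ((EuclideanSpace.equiv N ℂ).symm x).ofLp = x from rfl, h, map_smul, norm_smul] at key
  have hx' : 0 < ‖(EuclideanSpace.equiv N ℂ).symm x‖ := by simpa using hx
  exact le_of_mul_le_mul_right key hx'

lemma exists_eigenvalue_norm_sub_one_eq [Nonempty N] {u : Matrix N N ℂ}
    (hu : u ∈ unitaryGroup N ℂ) :
    ∃ (w : ℂ) (x : N → ℂ), x ≠ 0 ∧ u *ᵥ x = w • x ∧ ‖w‖ = 1 ∧ ‖w - 1‖ = ‖u - 1‖ := by
  -- `u - 1` is normal, so its norm is the spectral radius, which is attained on the spectrum.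
  have : IsStarNormal (u - 1) :=
    haveI := isStarNormal_of_mem_unitary hu
    (star_one (Matrix N N ℂ) ▸ Commute.one_right u).isStarNormal_sub
  obtain ⟨z, hz, hzu⟩ := spectrum.exists_nnnorm_eq_spectralRadius (u - 1)
  rw [IsStarNormal.spectralRadius_eq_nnnorm, ENNReal.coe_inj] at hzu
  have hw : z + 1 ∈ spectrum ℂ u := by
    have := Set.add_mem_add hz (Set.mem_singleton (1 : ℂ))
    rwa [spectrum.add_singleton_eq, map_one, sub_add_cancel] at this
  obtain ⟨x, hx0, hx⟩ := exists_mulVec_eq_smul_of_mem_spectrum hw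
  refine ⟨z + 1, x, hx0, hx, by simpa using spectrum.subset_circle_of_unitary hu hw, ?_⟩
  simpa using congrArg NNReal.toReal hzu

def reindexStarAlgEquiv (e : N ≃ M) : Matrix N N ℂ ≃⋆ₐ[ℂ] Matrix M M ℂ :=
  .ofAlgEquiv (reindexAlgEquiv ℂ ℂ e) fun A => by simp [star_eq_conjTranspose]

def fromBlocksDiagStarAlgHom : Matrix N N ℂ × Matrix M M ℂ →⋆ₐ[ℂ] Matrix (N ⊕ M) (N ⊕ M) ℂ where
  toFun p := fromBlocks p.1 0 0 p.2
  map_one' := fromBlocks_one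
  map_mul' p q := by simp [fromBlocks_multiply]
  map_zero' := fromBlocks_zero
  map_add' p q := by simp [fromBlocks_add]
  commutes' r := by
    simp only [Algebra.algebraMap_eq_smul_one, Prod.smul_fst, Prod.smul_snd, Prod.fst_one,
      Prod.snd_one, ← fromBlocks_one, fromBlocks_smul, smul_zero]
  map_star' p := by simp [star_eq_conjTranspose, fromBlocks_conjTranspose]

lemma norm_fromBlocksDiagStarAlgHom (p : Matrix N N ℂ × Matrix M M ℂ) :
    ‖fromBlocksDiagStarAlgHom p‖ = max ‖p.1‖ ‖p.2‖ :=
  NonUnitalStarAlgHom.norm_map fromBlocksDiagStarAlgHom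
    (fun p q h => by simpa [fromBlocksDiagStarAlgHom, Prod.ext_iff] using h) p

def kroneckerOneStarAlgHom : Matrix N N ℂ →⋆ₐ[ℂ] Matrix (N × M) (N × M) ℂ where
  toFun A := A ⊗ₖ 1
  map_one' := one_kronecker_one
  map_mul' A B := by rw [← mul_kronecker_mul, one_mul]
  map_zero' := zero_kronecker _
  map_add' A B := add_kronecker _ _ _
  commutes' r := by simp [Algebra.algebraMap_eq_smul_one, smul_kronecker]
  map_star' A := by simp [star_eq_conjTranspose, conjTranspose_kronecker]

def oneKroneckerStarAlgHom : Matrix M M ℂ →⋆ₐ[ℂ] Matrix (N × M) (N × M) ℂ where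
  toFun B := 1 ⊗ₖ B
  map_one' := one_kronecker_one
  map_mul' A B := by rw [← mul_kronecker_mul, one_mul]
  map_zero' := kronecker_zero _
  map_add' A B := kronecker_add _ _ _
  commutes' r := by simp [Algebra.algebraMap_eq_smul_one, kronecker_smul]
  map_star' A := by simp [star_eq_conjTranspose, conjTranspose_kronecker]

lemma l2_opNorm_kronecker_le (A : Matrix N N ℂ) (B : Matrix M M ℂ) :
    ‖A ⊗ₖ B‖ ≤ ‖A‖ * ‖B‖ :=
  calc ‖A ⊗ₖ B‖ = ‖(A ⊗ₖ 1 : Matrix (N × M) (N × M) ℂ) * (1 ⊗ₖ B)‖ := by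
        rw [← mul_kronecker_mul, mul_one, one_mul]
    _ ≤ ‖(A ⊗ₖ 1 : Matrix (N × M) (N × M) ℂ)‖ * ‖(1 ⊗ₖ B : Matrix (N × M) (N × M) ℂ)‖ :=
        norm_mul_le _ _
    _ ≤ ‖A‖ * ‖B‖ := by
        gcongr
        · exact NonUnitalStarAlgHom.norm_apply_le (kroneckerOneStarAlgHom (M := M)) A
        · exact NonUnitalStarAlgHom.norm_apply_le (oneKroneckerStarAlgHom (N := N)) B

end Matrix

section Amplification

variable {N : Type*} [Fintype N] [DecidableEq N]

def ampl : Matrix N N ℂ →⋆* Matrix (N ⊕ N × N) (N ⊕ N × N) ℂ where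
  toFun u := fromBlocksDiagStarAlgHom (u, u ⊗ₖ u)
  map_one' := by
    change fromBlocksDiagStarAlgHom (1, 1 ⊗ₖ 1) = 1
    rw [one_kronecker_one]
    exact map_one fromBlocksDiagStarAlgHom
  map_mul' u v := by rw [mul_kronecker_mul, ← map_mul, Prod.mk_mul_mk]
  map_star' u := by
    change fromBlocksDiagStarAlgHom (star u, star u ⊗ₖ star u) = _
    rw [← map_star, Prod.star_def, star_eq_conjTranspose, star_eq_conjTranspose,
      conjTranspose_kronecker]

lemma norm_ampl_sub_ampl (u v : Matrix N N ℂ) :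
    ‖ampl u - ampl v‖ = max ‖u - v‖ ‖u ⊗ₖ u - v ⊗ₖ v‖ := by
  change ‖fromBlocksDiagStarAlgHom _ - fromBlocksDiagStarAlgHom _‖ = _
  rw [← map_sub, norm_fromBlocksDiagStarAlgHom]
  rfl

lemma norm_ampl_sub_ampl_le {u v : Matrix N N ℂ} (hu : u ∈ unitaryGroup N ℂ)
    (hv : v ∈ unitaryGroup N ℂ) : ‖ampl u - ampl v‖ ≤ 2 * ‖u - v‖ := by
  have hkron : u ⊗ₖ u - v ⊗ₖ v = (u - v) ⊗ₖ u + v ⊗ₖ (u - v) := by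
    ext ⟨i, j⟩ ⟨k, l⟩
    simp only [Matrix.sub_apply, Matrix.add_apply, kroneckerMap_apply]
    ring
  have hkron_le : ‖u ⊗ₖ u - v ⊗ₖ v‖ ≤ 2 * ‖u - v‖ :=
    calc ‖u ⊗ₖ u - v ⊗ₖ v‖ ≤ ‖u - v‖ * ‖u‖ + ‖v‖ * ‖u - v‖ := by
          rw [hkron]
          exact (norm_add_le _ _).trans
            (add_le_add (l2_opNorm_kronecker_le _ _) (l2_opNorm_kronecker_le _ _))
      _ ≤ ‖u - v‖ * 1 + 1 * ‖u - v‖ := by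
          gcongr
          · exact CStarRing.norm_le_one_of_mem_unitary hu
          · exact CStarRing.norm_le_one_of_mem_unitary hv
      _ = 2 * ‖u - v‖ := by ring
  rw [norm_ampl_sub_ampl]
  exact max_le (by linarith [norm_nonneg (u - v)]) hkron_le

lemma min_sqrt_two_le_norm_ampl_sub_one {u : Matrix N N ℂ} (hu : u ∈ unitaryGroup N ℂ) :
    min √2 (√2 * ‖u - 1‖) ≤ ‖ampl u - 1‖ := by
  rcases isEmpty_or_nonempty N with _ | _
  · simp [Subsingleton.elim (u - 1) 0]
  obtain ⟨w, x, hx0, hux, hw, hwu⟩ := exists_eigenvalue_norm_sub_one_eq hu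
  have hxx : (fun p : N × N => x p.1 * x p.2) ≠ 0 := by
    obtain ⟨i, hi⟩ := Function.ne_iff.mp hx0
    exact Function.ne_iff.mpr ⟨(i, i), mul_ne_zero hi hi⟩
  have huu : (u ⊗ₖ u - 1) *ᵥ (fun p : N × N => x p.1 * x p.2)
      = (w ^ 2 - 1) • fun p : N × N => x p.1 * x p.2 := by
    rw [sub_mulVec, one_mulVec, kronecker_mulVec_kronecker, hux]
    ext p
    simp only [Pi.smul_apply, Pi.sub_apply, smul_eq_mul]
    ring
  calc min √2 (√2 * ‖u - 1‖) ≤ max ‖w - 1‖ ‖w ^ 2 - 1‖ :=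
        hwu ▸ Complex.min_sqrt_two_le_max_norm_sub_one hw
    _ ≤ max ‖u - 1‖ ‖u ⊗ₖ u - 1‖ :=
        max_le_max hwu.le (norm_le_l2_opNorm_of_mulVec_eq_smul hxx huu)
    _ = ‖ampl u - 1‖ := by
        rw [← map_one ampl, norm_ampl_sub_ampl, one_kronecker_one]

def amplFin (n : ℕ) :
    Matrix (Fin n) (Fin n) ℂ →⋆* Matrix (Fin (n + n * n)) (Fin (n + n * n)) ℂ :=
  (StarMonoidHom.ofClass
    (reindexStarAlgEquiv ((Equiv.sumCongr (.refl _) finProdFinEquiv).trans finSumFinEquiv))).comp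
    ampl

lemma norm_amplFin_sub_amplFin (n : ℕ) (u v : Matrix (Fin n) (Fin n) ℂ) :
    ‖amplFin n u - amplFin n v‖ = ‖ampl u - ampl v‖ := by
  change ‖reindexStarAlgEquiv _ (ampl u) - reindexStarAlgEquiv _ (ampl v)‖ = _
  rw [← map_sub, StarAlgEquiv.norm_map]

end Amplification

section AsymptoticRep

variable {G : Type*} [Group G] {d : ℕ → ℕ} {α : ∀ m : ℕ, G → unitaryGroup (Fin (d m)) ℂ}

lemma IsAsymptoticRep.map_unitary (hα : IsAsymptoticRep d α) {e : ℕ → ℕ}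
    (φ : ∀ m, Matrix (Fin (d m)) (Fin (d m)) ℂ →⋆* Matrix (Fin (e m)) (Fin (e m)) ℂ) {C : ℝ}
    (hφ : ∀ m, ∀ u ∈ unitaryGroup (Fin (d m)) ℂ, ∀ v ∈ unitaryGroup (Fin (d m)) ℂ,
      ‖φ m u - φ m v‖ ≤ C * ‖u - v‖) :
    IsAsymptoticRep e (fun m g => Unitary.map (φ m) (α m g)) := by
  intro g h
  refine squeeze_zero (fun m => norm_nonneg _) (fun m => ?_)
    (by simpa using (hα g h).const_mul C)
  simp only [Unitary.coe_map, matOpNorm_eq_norm, ← map_mul]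
  exact hφ m _ (α m (g * h)).2 _ (mul_mem (α m g).2 (α m h).2)

lemma IsAsymptoticRep.map_amplFin (hα : IsAsymptoticRep d α) :
    IsAsymptoticRep (fun m => d m + d m * d m)
      (fun m g => Unitary.map (amplFin (d m)) (α m g)) :=
  hα.map_unitary (fun m => amplFin (d m)) fun _ _ hu _ hv => by
    rw [norm_amplFin_sub_amplFin]
    exact norm_ampl_sub_ampl_le hu hv

lemma IsAsymptoticRep.exists_min_sqrt_two_pow_le (hα : IsAsymptoticRep d α) (g : G) (k : ℕ) :
    ∃ (e : ℕ → ℕ) (β : ∀ m : ℕ, G → unitaryGroup (Fin (e m)) ℂ), IsAsymptoticRep e β ∧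
      ∀ m, min √2 (√2 ^ k * matOpNorm ((α m g : Matrix (Fin (d m)) (Fin (d m)) ℂ) - 1)) ≤
        matOpNorm ((β m g : Matrix (Fin (e m)) (Fin (e m)) ℂ) - 1) := by
  induction k with
  | zero => exact ⟨d, α, hα, fun m => by simp⟩
  | succ k ih =>
    obtain ⟨e, β, hβ, hβg⟩ := ih
    refine ⟨_, _, hβ.map_amplFin, fun m => ?_⟩
    simp only [matOpNorm_eq_norm, Unitary.coe_map] at hβg ⊢
    calc min √2 (√2 ^ (k + 1) * ‖(α m g : Matrix (Fin (d m)) (Fin (d m)) ℂ) - 1‖)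
        = min √2 (√2 * min √2 (√2 ^ k * ‖(α m g : Matrix (Fin (d m)) (Fin (d m)) ℂ) - 1‖)) := by
          rw [Real.min_sqrt_two_sqrt_two_mul_min, pow_succ', mul_assoc]
      _ ≤ min √2 (√2 * ‖(β m g : Matrix (Fin (e m)) (Fin (e m)) ℂ) - 1‖) := by
          gcongr
          exact hβg m
      _ ≤ ‖amplFin (e m) (β m g) - 1‖ := by
          rw [← map_one (amplFin (e m)), norm_amplFin_sub_amplFin, map_one]
          exact min_sqrt_two_le_norm_ampl_sub_one (β m g).2

end AsymptoticRep

theorem stmt4_general (G : Type*) [Group G]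
    (d : ℕ → ℕ) (α : ∀ m : ℕ, G → Matrix.unitaryGroup (Fin (d m)) ℂ)
    (hα : IsAsymptoticRep d α) (g : G)
    (hg : 0 < Filter.limsup (fun m : ℕ =>
        matOpNorm ((α m g : Matrix (Fin (d m)) (Fin (d m)) ℂ) - 1)) atTop) :
    ∃ (e : ℕ → ℕ) (β : ∀ m : ℕ, G → Matrix.unitaryGroup (Fin (e m)) ℂ),
      IsAsymptoticRep e β ∧
      Real.sqrt 2 ≤ Filter.limsup (fun m : ℕ =>
        matOpNorm ((β m g : Matrix (Fin (e m)) (Fin (e m)) ℂ) - 1)) atTop := by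
  obtain ⟨c, hc0, hcg⟩ := exists_between hg
  obtain ⟨K, hK⟩ := pow_unbounded_of_one_lt (√2 / c) Real.one_lt_sqrt_two
  obtain ⟨e, β, hβ, hβg⟩ := hα.exists_min_sqrt_two_pow_le g K
  refine ⟨e, β, hβ, le_limsup_of_frequently_le ?_ ?_⟩
  · have hfreq := frequently_lt_of_lt_limsup
      (isCoboundedUnder_le_of_le atTop fun m => norm_nonneg _) hcg
    refine hfreq.mono fun m hm => (le_min le_rfl ?_).trans (hβg m)
    rw [div_lt_iff₀ hc0] at hK
    exact hK.le.trans (mul_le_mul_of_nonneg_left hm.le (by positivity))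
  · refine isBoundedUnder_of ⟨2, fun m => ?_⟩
    have hu := (β m g).2
    rw [matOpNorm_eq_norm]
    linarith [norm_sub_le (β m g : Matrix (Fin (e m)) (Fin (e m)) ℂ) 1,
      CStarRing.norm_le_one_of_mem_unitary hu,
      CStarRing.norm_le_one_of_mem_unitary (one_mem (unitaryGroup (Fin (e m)) ℂ))]

theorem stmt4 (G : Type*) [Group G] [Countable G]
    (d : ℕ → ℕ) (α : ∀ m : ℕ, G → Matrix.unitaryGroup (Fin (d m)) ℂ)
    (hα : IsAsymptoticRep d α) (g : G)
    (hg : 0 < Filter.limsup (fun m : ℕ =>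
        matOpNorm ((α m g : Matrix (Fin (d m)) (Fin (d m)) ℂ) - 1)) atTop) :
    ∃ (e : ℕ → ℕ) (β : ∀ m : ℕ, G → Matrix.unitaryGroup (Fin (e m)) ℂ),
      IsAsymptoticRep e β ∧
      Real.sqrt 2 ≤ Filter.limsup (fun m : ℕ =>
        matOpNorm ((β m g : Matrix (Fin (e m)) (Fin (e m)) ℂ) - 1)) atTop :=
  stmt4_general G d α hα g hg
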